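/- arXiv:2602.13947 — 6 statements merged into one kernel-verified Lean document; each statement's English description precedes it below -/
import Mathlib

section
/- Let V = ⨁_{p=0}^n V_p be a graded finite-dimensional complex vector space and for each p let η_p be a basis tuple of V_p. Suppose Ω_p = η_p + w_p and Ω̃_p = η_p + w̃_p with w_p, w̃_p valued in ⨁_{q>p} V_q, and suppose for each p that span(Ω_0,…,Ω_p) = span(Ω̃_0,…,Ω̃_p). Then Ω_p = Ω̃_p for all p. -/
open scoped DirectSum


/-- **Two adapted tuples with the same leading terms and the same spans coincide.**
Let `V = ⨁_{p=0}^n V_p` be a graded finite-dimensional complex vector space, with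
`η p` a basis tuple of `V_p`.  Suppose `Ω p = η p + w p` and `Ω' p = η p + w' p`
with `w p a, w' p a ∈ ⨁_{q > p} V_q`, and suppose that for every `p` the span of
`{Ω q a : q ≤ p}` equals the span of `{Ω' q a : q ≤ p}`.  Then `Ω p a = Ω' p a`
for all `p` and `a`. -/
theorem stmt6 {V : Type*} [AddCommGroup V] [Module ℂ V] [FiniteDimensional ℂ V]
    {n : ℕ} (Vp : Fin (n + 1) → Submodule ℂ V)
    (hdirect : DirectSum.IsInternal Vp)
    (ι : Fin (n + 1) → Type*) [∀ p, Fintype (ι p)]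
    (η : ∀ p, ι p → V)
    (hmem : ∀ p a, η p a ∈ Vp p)
    (hind : ∀ p, LinearIndependent ℂ (η p))
    (hspan : ∀ p, Submodule.span ℂ (Set.range (η p)) = Vp p)
    (Ω Ω' w w' : ∀ p, ι p → V)
    (hw : ∀ p a, w p a ∈ ⨆ q > p, Vp q)
    (hw' : ∀ p a, w' p a ∈ ⨆ q > p, Vp q)
    (hΩ : ∀ p a, Ω p a = η p a + w p a)
    (hΩ' : ∀ p a, Ω' p a = η p a + w' p a)
    (hspanEq : ∀ p : Fin (n + 1),
      Submodule.span ℂ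
          (Set.range (fun x : Σ q : {q : Fin (n + 1) // q ≤ p}, ι q.1 => Ω x.1.1 x.2))
        = Submodule.span ℂ
          (Set.range (fun x : Σ q : {q : Fin (n + 1) // q ≤ p}, ι q.1 => Ω' x.1.1 x.2))) :
    ∀ p a, Ω p a = Ω' p a := by
  classical
  set e : (⨁ i, ↥(Vp i)) ≃ₗ[ℂ] V :=
    LinearEquiv.ofBijective (DirectSum.coeLinearMap Vp) hdirect with he
  -- the projection onto `Vp r` along the other summands, as a map `V →ₗ[ℂ] V`
  set π : Fin (n + 1) → (V →ₗ[ℂ] V) := fun r =>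
    (Vp r).subtype ∘ₗ (DirectSum.component ℂ (Fin (n + 1)) (fun i => ↥(Vp i)) r) ∘ₗ
      (e.symm : V →ₗ[ℂ] ⨁ i, ↥(Vp i)) with hπ
  have hπ_apply : ∀ (r : Fin (n + 1)) (x : V), π r x = ((e.symm x) r : V) := fun r x => rfl
  have hπ_self : ∀ (r : Fin (n + 1)) (x : V), x ∈ Vp r → π r x = x := by
    intro r x hx
    rw [hπ_apply, he, hdirect.ofBijective_coeLinearMap_of_mem hx]
  have hπ_ne : ∀ (r q : Fin (n + 1)) (x : V), x ∈ Vp q → q ≠ r → π r x = 0 := by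
    intro r q x hx hne
    rw [hπ_apply, he, hdirect.ofBijective_coeLinearMap_of_mem_ne hne hx]
    simp
  have hπ_sup : ∀ (r p' : Fin (n + 1)), r ≤ p' → ∀ x : V, x ∈ (⨆ q > p', Vp q) → π r x = 0 := by
    intro r p' hrp x hx
    refine Submodule.iSup_induction (motive := fun y => π r y = 0)
      (fun q => ⨆ _ : q > p', Vp q) hx (fun q y hy => ?_) (map_zero _) ?_
    · by_cases h : q > p'
      · have hy' : y ∈ Vp q := by
          simpa only [show (q > p') = True from eq_true h, iSup_true] using hy
        exact hπ_ne r q y hy' (ne_of_gt (lt_of_le_of_lt hrp h))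
      · have hy' : y ∈ (⊥ : Submodule ℂ V) := by
          simpa only [show (q > p') = False from eq_false h, iSup_false] using hy
        show π r y = 0
        rw [(Submodule.mem_bot ℂ).mp hy', map_zero]
    · intro y z hy hz
      rw [map_add, hy, hz, add_zero]
  -- key: an element of the span of the `Ω'` up to `p` all of whose projections
  -- `π r`, `r ≤ p`, vanish is zero
  have key : ∀ (p : Fin (n + 1)) (x : V),
      x ∈ Submodule.span ℂ
        (Set.range (fun y : Σ q : {q : Fin (n + 1) // q ≤ p}, ι q.1 => Ω' y.1.1 y.2)) →
      (∀ r : Fin (n + 1), r ≤ p → π r x = 0) → x = 0 := by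
    intro p x hx hproj
    obtain ⟨c, hc⟩ := (Submodule.mem_span_range_iff_exists_fun ℂ).mp hx
    have hc0 : ∀ y : Σ q : {q : Fin (n + 1) // q ≤ p}, ι q.1, c y = 0 := by
      suffices H : ∀ m : ℕ, ∀ q : {q : Fin (n + 1) // q ≤ p}, (q.1 : ℕ) = m →
          ∀ b : ι q.1, c ⟨q, b⟩ = 0 by
        rintro ⟨q, b⟩; exact H q.1 q rfl b
      intro m
      induction m using Nat.strong_induction_on with
      | _ m IH =>
        intro q hqm b
        have h0 : π q.1 x = 0 := hproj q.1 q.2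
        rw [← hc, map_sum] at h0
        rw [← Finset.univ_sigma_univ, Finset.sum_sigma] at h0
        rw [Finset.sum_eq_single q] at h0
        · -- now the single sum over `ι q.1`
          have hterm : ∀ b' : ι q.1, π q.1 (c ⟨q, b'⟩ • Ω' q.1 b') = c ⟨q, b'⟩ • η q.1 b' := by
            intro b'
            rw [map_smul, hΩ', map_add, hπ_self q.1 _ (hmem q.1 b'),
              hπ_sup q.1 q.1 le_rfl _ (hw' q.1 b'), add_zero]
          rw [Finset.sum_congr rfl (fun b' _ => hterm b')] at h0
          exact Fintype.linearIndependent_iff.mp (hind q.1) _ h0 b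
        · intro t _ htq
          have htq' : t.1 ≠ q.1 := fun h => htq (Subtype.ext h)
          rcases lt_or_gt_of_ne htq' with hlt | hgt
          · -- t.1 < q.1 : use the inductive hypothesis
            refine Finset.sum_eq_zero fun b' _ => ?_
            have : c ⟨t, b'⟩ = 0 := IH t.1.1 (by rw [← hqm]; exact hlt) t rfl b'
            rw [this, zero_smul, map_zero]
          · -- t.1 > q.1 : the projection kills it
            refine Finset.sum_eq_zero fun b' _ => ?_
            rw [map_smul, hΩ', map_add, hπ_ne q.1 t.1 _ (hmem t.1 b') htq',
              hπ_sup q.1 t.1 (le_of_lt hgt) _ (hw' t.1 b'), add_zero, smul_zero]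
        · intro hq
          exact absurd (Finset.mem_univ q) hq
    rw [← hc]
    exact Finset.sum_eq_zero fun y _ => by rw [hc0 y, zero_smul]
  -- main argument
  intro p a
  have h1 : Ω p a ∈ Submodule.span ℂ
      (Set.range (fun y : Σ q : {q : Fin (n + 1) // q ≤ p}, ι q.1 => Ω' y.1.1 y.2)) := by
    rw [← hspanEq p]
    exact Submodule.subset_span ⟨⟨⟨p, le_refl p⟩, a⟩, rfl⟩
  have h2 : Ω' p a ∈ Submodule.span ℂ
      (Set.range (fun y : Σ q : {q : Fin (n + 1) // q ≤ p}, ι q.1 => Ω' y.1.1 y.2)) :=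
    Submodule.subset_span ⟨⟨⟨p, le_refl p⟩, a⟩, rfl⟩
  have hd : Ω p a - Ω' p a ∈ Submodule.span ℂ
      (Set.range (fun y : Σ q : {q : Fin (n + 1) // q ≤ p}, ι q.1 => Ω' y.1.1 y.2)) :=
    sub_mem h1 h2
  have hproj : ∀ r : Fin (n + 1), r ≤ p → π r (Ω p a - Ω' p a) = 0 := by
    intro r hr
    have heq : Ω p a - Ω' p a = w p a - w' p a := by
      rw [hΩ, hΩ']; abel
    rw [heq, map_sub, hπ_sup r p hr _ (hw p a), hπ_sup r p hr _ (hw' p a), sub_zero]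
  exact sub_eq_zero.mp (key p _ hd hproj)
end

section
/- Let n ≥ 1 and suppose Φ^{(p,q)} : U → Mat(m_p × m_q, ℂ) are holomorphic matrix-valued functions on an open set U ⊆ ℂ^N, for 0 ≤ p ≤ q ≤ n, with Φ^{(p,p)} = I. If, in the sense of formal types, the relation ∂Φ^{(p,p+i)}/∂t_μ = (∂Φ^{(p,p+1)}/∂t_μ) · Φ^{(p+1,p+i)} holds for i = 1, then assuming the Griffiths transversality relation dΩ_{(p)} ∈ span(Ω_{(0)},…,Ω_{(p+1)}) (where Ω_{(p)} = η_{(p)} + Σ_{i≥1} Φ^{(p,p+i)} η_{(p+i)} for fixed linearly independent tuples η_{(q)} adapted to a grading), one has ∂Φ^{(p,p+i)}/∂t_μ = (∂Φ^{(p,p+1)}/∂t_μ) · Φ^{(p+1,p+i)} for all i ≥ 1 and all μ. -/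
/-- **Derivative lemma for period-map blocks (Lemma 2.1).**
Let `H = ⨁_{q=0}^n H_q` be a graded finite-dimensional complex vector space with
basis tuples `η q` of `H_q`.  For holomorphic matrix-valued functions
`Φ^{(p,q)}(t)` on an open set `U ⊆ ℂ^N` with `Φ^{(p,p)} = I`, set
`Ω_{(p)}(t) = η_{(p)} + ∑_{i=1}^{n-p} Φ^{(p,p+i)}(t)·η_{(p+i)}`.  If the Griffiths
transversality relation `∂Ω_{(p)}/∂t_μ ∈ span(Ω_{(0)},…,Ω_{(p+1)})` holds, then
`∂Φ^{(p,p+i)}/∂t_μ = (∂Φ^{(p,p+1)}/∂t_μ) · Φ^{(p+1,p+i)}` for all `i ≥ 1` and `μ`. -/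
theorem stmt9 {H : Type*} [NormedAddCommGroup H] [NormedSpace ℂ H]
    [FiniteDimensional ℂ H]
    {n N : ℕ} (m : ℕ → ℕ)
    (Hq : ℕ → Submodule ℂ H)
    (hdirect : DirectSum.IsInternal fun q : Fin (n + 1) => Hq q)
    (η : ∀ q : ℕ, Fin (m q) → H)
    (hmem : ∀ q a, η q a ∈ Hq q)
    (hind : ∀ q, LinearIndependent ℂ (η q))
    (hspan : ∀ q, Submodule.span ℂ (Set.range (η q)) = Hq q)
    (U : Set (Fin N → ℂ)) (hU : IsOpen U)
    (Φ : ∀ p q : ℕ, (Fin N → ℂ) → Matrix (Fin (m p)) (Fin (m q)) ℂ)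
    (hΦdiag : ∀ p t, Φ p p t = 1)
    (hΦdiff : ∀ p q a b, DifferentiableOn ℂ (fun t => Φ p q t a b) U)
    (Ω : ∀ p : ℕ, (Fin N → ℂ) → Fin (m p) → H)
    (hΩ : ∀ p t a,
      Ω p t a = η p a + ∑ q ∈ Finset.Ioc p n, ∑ b, Φ p q t a b • η q b)
    (htrans : ∀ p ≤ n, ∀ t ∈ U, ∀ (μ : Fin N) (a : Fin (m p)),
      fderiv ℂ (fun s => Ω p s a) t (Pi.single μ 1) ∈
        Submodule.span ℂ {v : H | ∃ q ≤ p + 1, ∃ b : Fin (m q), v = Ω q t b}) :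
    ∀ p i, 1 ≤ i → p + i ≤ n → ∀ t ∈ U, ∀ μ : Fin N,
      (Matrix.of fun a b =>
          fderiv ℂ (fun s => Φ p (p + i) s a b) t (Pi.single μ 1))
        = (Matrix.of fun a b =>
            fderiv ℂ (fun s => Φ p (p + 1) s a b) t (Pi.single μ 1))
          * Φ (p + 1) (p + i) t := by
  classical
  intro p i hi hpi t ht μ
  have hp : p ≤ n := by omega
  have hp1 : p + 1 ≤ n := by omega
  -- a basis of each graded piece
  let bfam : ∀ q : Fin (n + 1), Module.Basis (Fin (m q)) ℂ (Hq q) := fun q =>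
    (Module.Basis.span (hind q)).map (LinearEquiv.ofEq _ _ (hspan q))
  -- the collected basis of `H`
  let B : Module.Basis ((q : Fin (n + 1)) × Fin (m q)) ℂ H := hdirect.collectedBasis bfam
  have hB : ∀ (q : Fin (n + 1)) (b : Fin (m (q : ℕ))), B ⟨q, b⟩ = η q b := by
    intro q b
    have h1 := congrFun (hdirect.collectedBasis_coe bfam) ⟨q, b⟩
    simp only [B, bfam] at *
    rw [h1]
    simp [Module.Basis.map_apply, Module.Basis.span_apply]
  -- coordinate functionals
  set κ : ∀ s : Fin (n + 1), Fin (m (s : ℕ)) → (H →ₗ[ℂ] ℂ) :=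
    fun s x => B.coord ⟨s, x⟩ with hκ
  have Ls0 : ∀ (q : ℕ) (hq : q ≤ n) (b : Fin (m q)) (s : Fin (n + 1))
      (x : Fin (m (s : ℕ))), q ≠ (s : ℕ) → κ s x (η q b) = 0 := by
    intro q hq b s x hqs
    have hqlt : q < n + 1 := by omega
    have hη : η q b = B ⟨⟨q, hqlt⟩, b⟩ := (hB ⟨q, hqlt⟩ b).symm
    rw [hη, hκ]
    simp only [Module.Basis.coord_apply, Module.Basis.repr_self]
    rw [Finsupp.single_apply, if_neg]
    intro hcon
    exact hqs (congrArg (fun z : ((q : Fin (n + 1)) × Fin (m q)) => (z.1 : ℕ)) hcon)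
  have Ls1 : ∀ (s : Fin (n + 1)) (b x : Fin (m (s : ℕ))),
      κ s x (η s b) = if b = x then 1 else 0 := by
    intro s b x
    rw [← hB s b, hκ]
    simp only [Module.Basis.coord_apply, Module.Basis.repr_self]
    rw [Finsupp.single_apply]
    by_cases hbx : b = x
    · subst hbx; simp
    · rw [if_neg, if_neg hbx]
      intro hcon
      exact hbx (eq_of_heq (Sigma.mk.inj_iff.mp hcon).2)
  -- collapsing lemma for sums of graded terms
  have Lcoll : ∀ (S : Finset ℕ), (∀ q ∈ S, q ≤ n) → ∀ (f : ∀ q, Fin (m q) → ℂ)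
      (s : Fin (n + 1)) (x : Fin (m (s : ℕ))),
      κ s x (∑ q ∈ S, ∑ b, f q b • η q b) =
        if (s : ℕ) ∈ S then f s x else 0 := by
    intro S hS f s x
    rw [map_sum]
    by_cases hmemS : (s : ℕ) ∈ S
    · rw [if_pos hmemS, Finset.sum_eq_single_of_mem (s : ℕ) hmemS]
      · rw [map_sum]
        have : ∀ b : Fin (m (s : ℕ)), κ s x (f s b • η s b)
            = if b = x then f s b else 0 := by
          intro b
          rw [map_smul, Ls1 s b x, smul_eq_mul]
          by_cases hbx : b = x <;> simp [hbx]
        rw [Finset.sum_congr rfl fun b _ => this b, Finset.sum_ite_eq']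
        simp
      · intro q hq hne
        rw [map_sum, Finset.sum_eq_zero]
        intro b _
        rw [map_smul, Ls0 q (hS q hq) b s x hne, smul_eq_mul, mul_zero]
    · rw [if_neg hmemS, Finset.sum_eq_zero]
      intro q hq
      rw [map_sum, Finset.sum_eq_zero]
      intro b _
      rw [map_smul, Ls0 q (hS q hq) b s x (fun h => hmemS (h ▸ hq)), smul_eq_mul,
        mul_zero]
  -- coordinates of the period vectors
  have LΩ : ∀ (r : ℕ), r ≤ n → ∀ (b : Fin (m r)) (s : Fin (n + 1))
      (x : Fin (m (s : ℕ))),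
      κ s x (Ω r t b) = if r ≤ (s : ℕ) then Φ r s t b x else 0 := by
    intro r hr b s x
    obtain ⟨sv, hsv⟩ := s
    simp only [Fin.val_mk] at x ⊢
    have hsn : sv ≤ n := by omega
    rw [hΩ, map_add,
      Lcoll _ (fun q hq => (Finset.mem_Ioc.mp hq).2) (fun q b' => Φ r q t b b')
        ⟨sv, hsv⟩ x]
    simp only [Fin.val_mk, Finset.mem_Ioc]
    rcases lt_trichotomy r sv with hlt | heq | hgt
    · rw [Ls0 r hr b ⟨sv, hsv⟩ x (by simpa using Nat.ne_of_lt hlt), zero_add,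
        if_pos ⟨hlt, hsn⟩, if_pos (le_of_lt hlt)]
    · subst heq
      have h1 : κ ⟨r, hsv⟩ x (η r b) = if b = x then 1 else 0 := Ls1 ⟨r, hsv⟩ b x
      rw [h1, if_neg (show ¬(r < r ∧ r ≤ n) by omega), add_zero,
        if_pos (show r ≤ r from le_rfl), hΦdiag, Matrix.one_apply]
    · rw [Ls0 r hr b ⟨sv, hsv⟩ x (by simpa using Nat.ne_of_gt hgt), zero_add,
        if_neg (by omega), if_neg (by omega)]
  -- the derivative of the period vector
  have hdΩ : ∀ a : Fin (m p),
      fderiv ℂ (fun s => Ω p s a) t =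
        ∑ q ∈ Finset.Ioc p n, ∑ b,
          (fderiv ℂ (fun s' => Φ p q s' a b) t).smulRight (η q b) := by
    intro a
    have hfa : (fun s => Ω p s a) = fun s =>
        η p a + ∑ q ∈ Finset.Ioc p n, ∑ b, Φ p q s a b • η q b :=
      funext fun s => hΩ p s a
    have hder : HasFDerivAt
        (fun s => η p a + ∑ q ∈ Finset.Ioc p n, ∑ b, Φ p q s a b • η q b)
        (∑ q ∈ Finset.Ioc p n, ∑ b,
          (fderiv ℂ (fun s' => Φ p q s' a b) t).smulRight (η q b)) t := by
      apply HasFDerivAt.const_add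
      apply HasFDerivAt.fun_sum
      intro q _
      apply HasFDerivAt.fun_sum
      intro b _
      exact (((hΦdiff p q a b).differentiableAt
        (hU.mem_nhds ht)).hasFDerivAt).smul_const (η q b)
    rw [hfa]
    exact hder.fderiv
  -- extract the span coefficients
  have hsetr : {v : H | ∃ q ≤ p + 1, ∃ b : Fin (m q), v = Ω q t b} =
      Set.range (fun x : ((r : Fin (p + 2)) × Fin (m (r : ℕ))) => Ω x.1 t x.2) := by
    ext v
    constructor
    · rintro ⟨q, hq, b, rfl⟩
      exact ⟨⟨⟨q, by omega⟩, b⟩, rfl⟩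
    · rintro ⟨⟨r, b⟩, rfl⟩
      exact ⟨r, Nat.lt_succ_iff.mp r.isLt, b, rfl⟩
  have hc0 : ∀ a : Fin (m p), ∃ c : ((r : Fin (p + 2)) × Fin (m (r : ℕ))) → ℂ,
      ∑ j, c j • Ω (j.1 : ℕ) t j.2 = fderiv ℂ (fun s => Ω p s a) t (Pi.single μ 1) := by
    intro a
    have h := htrans p hp t ht μ a
    rw [hsetr] at h
    exact (Submodule.mem_span_range_iff_exists_fun ℂ).mp h
  choose c hc using hc0
  -- the scalar equations
  have Eqs : ∀ (a : Fin (m p)) (sv : ℕ), sv ≤ n → ∀ x : Fin (m sv),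
      (if sv ∈ Finset.Ioc p n then
          fderiv ℂ (fun s' => Φ p sv s' a x) t (Pi.single μ 1) else 0) =
        ∑ r : Fin (p + 2), ∑ b : Fin (m (r : ℕ)), c a ⟨r, b⟩ *
          (if (r : ℕ) ≤ sv then Φ r sv t b x else 0) := by
    intro a sv hsvn x
    have hsv : sv < n + 1 := by omega
    have hv : (∑ q ∈ Finset.Ioc p n, ∑ b,
        (fderiv ℂ (fun s' => Φ p q s' a b) t (Pi.single μ 1)) • η q b)
        = ∑ j : ((r : Fin (p + 2)) × Fin (m (r : ℕ))), c a j • Ω (j.1 : ℕ) t j.2 := by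
      rw [hc a, hdΩ a]
      simp [ContinuousLinearMap.sum_apply, ContinuousLinearMap.smulRight_apply]
    have hR : ∀ j : ((r : Fin (p + 2)) × Fin (m (r : ℕ))),
        κ ⟨sv, hsv⟩ x (c a j • Ω (j.1 : ℕ) t j.2) =
          c a j * (if (j.1 : ℕ) ≤ sv then Φ (j.1 : ℕ) sv t j.2 x else 0) := by
      intro j
      rw [map_smul, smul_eq_mul]
      congr 1
      exact LΩ (j.1 : ℕ) (by omega) j.2 ⟨sv, hsv⟩ x
    calc (if sv ∈ Finset.Ioc p n then
            fderiv ℂ (fun s' => Φ p sv s' a x) t (Pi.single μ 1) else 0)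
        = κ ⟨sv, hsv⟩ x (∑ q ∈ Finset.Ioc p n, ∑ b,
            (fderiv ℂ (fun s' => Φ p q s' a b) t (Pi.single μ 1)) • η q b) :=
          (Lcoll _ (fun q hq => (Finset.mem_Ioc.mp hq).2)
            (fun q b => fderiv ℂ (fun s' => Φ p q s' a b) t (Pi.single μ 1))
            ⟨sv, hsv⟩ x).symm
      _ = κ ⟨sv, hsv⟩ x (∑ j : ((r : Fin (p + 2)) × Fin (m (r : ℕ))),
            c a j • Ω (j.1 : ℕ) t j.2) := congrArg _ hv
      _ = ∑ j : ((r : Fin (p + 2)) × Fin (m (r : ℕ))),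
            κ ⟨sv, hsv⟩ x (c a j • Ω (j.1 : ℕ) t j.2) := map_sum _ _ _
      _ = ∑ j : ((r : Fin (p + 2)) × Fin (m (r : ℕ))),
            c a j * (if (j.1 : ℕ) ≤ sv then Φ (j.1 : ℕ) sv t j.2 x else 0) :=
          Finset.sum_congr rfl fun j _ => hR j
      _ = _ := by rw [← Finset.univ_sigma_univ, Finset.sum_sigma]
  -- Step 1: the coefficients in degrees ≤ p vanish
  have claim1 : ∀ sv, ∀ hsvp : sv ≤ p, ∀ (a : Fin (m p)) (x : Fin (m sv)),
      c a ⟨⟨sv, by omega⟩, x⟩ = 0 := by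
    intro sv
    induction sv using Nat.strong_induction_on with
    | _ sv IH =>
      intro hsvp a x
      have heq := Eqs a sv (by omega) x
      rw [if_neg (by simp only [Finset.mem_Ioc]; omega)] at heq
      rw [Finset.sum_eq_single (⟨sv, by omega⟩ : Fin (p + 2))] at heq
      · have hstep : ∀ b : Fin (m sv),
            c a ⟨⟨sv, by omega⟩, b⟩ * (if sv ≤ sv then Φ sv sv t b x else 0)
              = if b = x then c a ⟨⟨sv, by omega⟩, b⟩ else 0 := by
          intro b
          rw [if_pos le_rfl, hΦdiag, Matrix.one_apply]
          by_cases hbx : b = x <;> simp [hbx]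
        rw [Finset.sum_congr rfl fun b _ => hstep b, Finset.sum_ite_eq'] at heq
        simpa using heq.symm
      · intro r _ hne
        rcases Nat.lt_trichotomy (r : ℕ) sv with hlt | heqv | hgt
        · apply Finset.sum_eq_zero
          intro b _
          rw [show c a ⟨r, b⟩ = 0 from IH (r : ℕ) hlt (by omega) a b, zero_mul]
        · exact absurd (Fin.ext heqv) hne
        · apply Finset.sum_eq_zero
          intro b _
          rw [if_neg (by omega), mul_zero]
      · intro hnotmem
        exact absurd (Finset.mem_univ _) hnotmem
  -- Step 2: the equation in degrees > p
  have claim2 : ∀ sv : ℕ, p < sv → sv ≤ n → ∀ (a : Fin (m p)) (x : Fin (m sv)),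
      fderiv ℂ (fun s' => Φ p sv s' a x) t (Pi.single μ 1) =
        ∑ b, c a ⟨⟨p + 1, by omega⟩, b⟩ * Φ (p + 1) sv t b x := by
    intro sv hps hsn a x
    have heq := Eqs a sv hsn x
    rw [if_pos (by simp only [Finset.mem_Ioc]; omega)] at heq
    rw [Finset.sum_eq_single (⟨p + 1, by omega⟩ : Fin (p + 2))] at heq
    · rw [heq]
      apply Finset.sum_congr rfl
      intro b _
      rw [if_pos (by omega)]
    · intro r _ hne
      have hrp : (r : ℕ) ≤ p := by
        have hlt := r.isLt
        rcases Nat.lt_succ_iff_lt_or_eq.mp (show (r : ℕ) < p + 2 by omega) with h | h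
        · omega
        · exact absurd (Fin.ext h) hne
      apply Finset.sum_eq_zero
      intro b _
      rw [show c a ⟨r, b⟩ = 0 from claim1 (r : ℕ) hrp a b, zero_mul]
    · intro hnotmem
      exact absurd (Finset.mem_univ _) hnotmem
  -- Step 3: identify the (p+1)-coefficients with the first derivative block
  have claim3 : ∀ (a : Fin (m p)) (x : Fin (m (p + 1))),
      c a ⟨⟨p + 1, by omega⟩, x⟩ =
        fderiv ℂ (fun s' => Φ p (p + 1) s' a x) t (Pi.single μ 1) := by
    intro a x
    have h := claim2 (p + 1) (by omega) hp1 a x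
    rw [hΦdiag] at h
    have : ∀ b : Fin (m (p + 1)),
        c a ⟨⟨p + 1, by omega⟩, b⟩ * (1 : Matrix (Fin (m (p + 1))) (Fin (m (p + 1))) ℂ) b x
          = if b = x then c a ⟨⟨p + 1, by omega⟩, b⟩ else 0 := by
      intro b
      rw [Matrix.one_apply]
      by_cases hbx : b = x <;> simp [hbx]
    rw [Finset.sum_congr rfl fun b _ => this b, Finset.sum_ite_eq'] at h
    simpa using h.symm
  -- conclusion
  ext a x
  have h := claim2 (p + i) (by omega) hpi a x
  simp only [Matrix.of_apply, Matrix.mul_apply]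
  rw [h]
  apply Finset.sum_congr rfl
  intro b _
  rw [claim3 a b]
end

section
/- Under the hypotheses of the derivative lemma (Griffiths transversality for the tuples Ω_{(p)}(t) = η_{(p)} + Σ_{i≥1} Φ^{(p,p+i)}(t) η_{(p+i)}), the coefficient matrices A_{(0)}(t), …, A_{(p)}(t) expressing ∂Ω_{(p)}/∂t_μ in terms of Ω_{(0)}(t), …, Ω_{(p+1)}(t) all vanish except A_{(p+1)}(t), which equals ∂Φ^{(p,p+1)}/∂t_μ (t). -/
/-- **Coefficient matrices in the transversality relation (proof of Lemma 2.1).**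
In the setting of the derivative lemma, the coefficient matrices
`A_{(0)}(t), …, A_{(p)}(t)` expressing `∂Ω_{(p)}/∂t_μ` in terms of
`Ω_{(0)}(t), …, Ω_{(p+1)}(t)` all vanish, while `A_{(p+1)}(t)` equals
`∂Φ^{(p,p+1)}/∂t_μ (t)`. -/
theorem stmt10 {H : Type*} [NormedAddCommGroup H] [NormedSpace ℂ H]
    [FiniteDimensional ℂ H]
    {n N : ℕ} (m : ℕ → ℕ)
    (Hq : ℕ → Submodule ℂ H)
    (hdirect : DirectSum.IsInternal fun q : Fin (n + 1) => Hq q)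
    (η : ∀ q : ℕ, Fin (m q) → H)
    (hmem : ∀ q a, η q a ∈ Hq q)
    (hind : ∀ q, LinearIndependent ℂ (η q))
    (hspan : ∀ q, Submodule.span ℂ (Set.range (η q)) = Hq q)
    (U : Set (Fin N → ℂ)) (hU : IsOpen U)
    (Φ : ∀ p q : ℕ, (Fin N → ℂ) → Matrix (Fin (m p)) (Fin (m q)) ℂ)
    (hΦdiag : ∀ p t, Φ p p t = 1)
    (hΦdiff : ∀ p q a b, DifferentiableOn ℂ (fun t => Φ p q t a b) U)
    (Ω : ∀ p : ℕ, (Fin N → ℂ) → Fin (m p) → H)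
    (hΩ : ∀ p t a,
      Ω p t a = η p a + ∑ q ∈ Finset.Ioc p n, ∑ b, Φ p q t a b • η q b)
    (htrans : ∀ p ≤ n, ∀ t ∈ U, ∀ (μ : Fin N) (a : Fin (m p)),
      fderiv ℂ (fun s => Ω p s a) t (Pi.single μ 1) ∈
        Submodule.span ℂ {v : H | ∃ q ≤ p + 1, ∃ b : Fin (m q), v = Ω q t b}) :
    ∀ p, p + 1 ≤ n → ∀ t ∈ U, ∀ μ : Fin N,
      ∀ A : ∀ j : ℕ, Matrix (Fin (m p)) (Fin (m j)) ℂ,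
        (∀ a, fderiv ℂ (fun s => Ω p s a) t (Pi.single μ 1)
            = ∑ j ∈ Finset.range (p + 2), ∑ b, A j a b • Ω j t b) →
        (∀ j ≤ p, A j = 0) ∧
          A (p + 1) = Matrix.of fun a b =>
            fderiv ℂ (fun s => Φ p (p + 1) s a b) t (Pi.single μ 1) := by
  classical
  intro p hp t ht μ A hA
  -- the combined family of basis vectors is linearly independent
  set B : Module.Basis ((q : Fin (n+1)) × Fin (m ↑q)) ℂ H :=
    hdirect.collectedBasis (fun q : Fin (n+1) =>
      (Module.Basis.span (hind ↑q)).map (LinearEquiv.ofEq _ _ (hspan ↑q))) with hB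
  have hcoeB : ⇑B = fun x : (q : Fin (n+1)) × Fin (m ↑q) => η ↑x.1 x.2 := by
    rw [hB, DirectSum.IsInternal.collectedBasis_coe]
    funext x
    simp [Module.Basis.span_apply]
  have hkey : ∀ g : ((q : Fin (n+1)) × Fin (m ↑q)) → ℂ,
      (∑ x : (q : Fin (n+1)) × Fin (m ↑q), g x • η ↑x.1 x.2) = 0 → ∀ x, g x = 0 := by
    have hli := B.linearIndependent
    rw [hcoeB] at hli
    exact Fintype.linearIndependent_iff.mp hli
  -- derivative of Ω p
  have hdiffΦ : ∀ j q a b, DifferentiableAt ℂ (fun s => Φ j q s a b) t :=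
    fun j q a b => (hΦdiff j q a b).differentiableAt (hU.mem_nhds ht)
  have hD : ∀ a, fderiv ℂ (fun s => Ω p s a) t (Pi.single μ 1)
      = ∑ q ∈ Finset.Ioc p n, ∑ b,
          (fderiv ℂ (fun s => Φ p q s a b) t (Pi.single μ 1)) • η q b := by
    intro a
    have h1 : (fun s => Ω p s a)
        = fun s => η p a + ∑ q ∈ Finset.Ioc p n, ∑ b, Φ p q s a b • η q b := by
      funext s; exact hΩ p s a
    rw [h1, fderiv_const_add, fderiv_fun_sum
      (fun q _ => DifferentiableAt.fun_sum fun b _ => (hdiffΦ p q a b).smul_const _),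
      ContinuousLinearMap.sum_apply]
    refine Finset.sum_congr rfl fun q _ => ?_
    rw [fderiv_fun_sum (fun b _ => (hdiffΦ p q a b).smul_const _),
      ContinuousLinearMap.sum_apply]
    refine Finset.sum_congr rfl fun b _ => ?_
    rw [fderiv_smul_const (hdiffΦ p q a b), ContinuousLinearMap.smulRight_apply]
  -- Ω as a closed-interval sum
  have hΩ' : ∀ j, j ≤ n → ∀ b : Fin (m j),
      Ω j t b = ∑ q ∈ Finset.Icc j n, ∑ c, Φ j q t b c • η q c := by
    intro j hj b
    have h2 : (∑ c, Φ j j t b c • η j c) = η j b := by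
      rw [hΦdiag]
      simp [Matrix.one_apply, ite_smul]
    rw [hΩ j t b, Finset.Icc_eq_cons_Ioc hj, Finset.sum_cons, h2]
  -- rewrite the left-hand side over range (n+1)
  have hLHS : ∀ a : Fin (m p),
      (∑ q ∈ Finset.Ioc p n, ∑ b,
          (fderiv ℂ (fun s => Φ p q s a b) t (Pi.single μ 1)) • η q b)
      = ∑ q ∈ Finset.range (n+1), ∑ b,
          (if p < q then fderiv ℂ (fun s => Φ p q s a b) t (Pi.single μ 1) else 0) • η q b := by
    intro a
    have h1 : (∑ q ∈ Finset.Ioc p n, ∑ b,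
          (fderiv ℂ (fun s => Φ p q s a b) t (Pi.single μ 1)) • η q b)
        = ∑ q ∈ Finset.Ioc p n, ∑ b,
          (if p < q then fderiv ℂ (fun s => Φ p q s a b) t (Pi.single μ 1) else 0) • η q b := by
      refine Finset.sum_congr rfl fun q hq => ?_
      have hpq := (Finset.mem_Ioc.mp hq).1
      simp [hpq]
    rw [h1]
    refine Finset.sum_subset (fun q hq => Finset.mem_range.mpr ?_) (fun q hq hq' => ?_)
    · have := Finset.mem_Ioc.mp hq; omega
    · have h3 := Finset.mem_range.mp hq
      rw [Finset.mem_Ioc] at hq'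
      have h2 : ¬ p < q := by omega
      simp [h2]
  -- rewrite the right-hand side over range (n+1)
  have hRHS : ∀ a : Fin (m p),
      (∑ j ∈ Finset.range (p+2), ∑ b, A j a b • Ω j t b)
      = ∑ q ∈ Finset.range (n+1), ∑ c,
          (∑ j ∈ Finset.range (min (p+2) (q+1)), ∑ b, A j a b * Φ j q t b c) • η q c := by
    intro a
    calc ∑ j ∈ Finset.range (p+2), ∑ b, A j a b • Ω j t b
        = ∑ j ∈ Finset.range (p+2), ∑ q ∈ Finset.Icc j n, ∑ c,
            (∑ b, A j a b * Φ j q t b c) • η q c := by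
          refine Finset.sum_congr rfl fun j hj => ?_
          have hjn : j ≤ n := by
            simp only [Finset.mem_range] at hj; omega
          simp_rw [hΩ' j hjn, Finset.smul_sum, smul_smul]
          rw [Finset.sum_comm]
          refine Finset.sum_congr rfl fun q _ => ?_
          rw [Finset.sum_comm]
          refine Finset.sum_congr rfl fun c _ => ?_
          rw [Finset.sum_smul]
      _ = ∑ q ∈ Finset.range (n+1), ∑ j ∈ Finset.range (min (p+2) (q+1)), ∑ c,
            (∑ b, A j a b * Φ j q t b c) • η q c := by
          refine Finset.sum_comm' ?_
          intro j q
          simp only [Finset.mem_range, Finset.mem_Icc]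
          omega
      _ = ∑ q ∈ Finset.range (n+1), ∑ c,
            (∑ j ∈ Finset.range (min (p+2) (q+1)), ∑ b, A j a b * Φ j q t b c) • η q c := by
          refine Finset.sum_congr rfl fun q _ => ?_
          rw [Finset.sum_comm]
          exact Finset.sum_congr rfl fun c _ => (Finset.sum_smul).symm
  -- coefficient comparison
  have hcoef : ∀ (a : Fin (m p)) (x : (q : Fin (n+1)) × Fin (m ↑q)),
      (if p < ↑x.1 then fderiv ℂ (fun s => Φ p ↑x.1 s a x.2) t (Pi.single μ 1) else 0)
        = ∑ j ∈ Finset.range (min (p+2) (↑x.1+1)), ∑ b, A j a b * Φ j ↑x.1 t b x.2 := by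
    intro a x
    have hE := (hD a).symm.trans (hA a)
    rw [hLHS a, hRHS a] at hE
    have hsig : ∑ x : (q : Fin (n+1)) × Fin (m ↑q),
        (((if p < ↑x.1 then fderiv ℂ (fun s => Φ p ↑x.1 s a x.2) t (Pi.single μ 1) else 0)
          - ∑ j ∈ Finset.range (min (p+2) (↑x.1+1)), ∑ b, A j a b * Φ j ↑x.1 t b x.2)
          • η ↑x.1 x.2) = 0 := by
      simp_rw [sub_smul]
      rw [Finset.sum_sub_distrib, sub_eq_zero, ← Finset.univ_sigma_univ,
        Finset.sum_sigma, Finset.sum_sigma]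
      rw [Fin.sum_univ_eq_sum_range (fun q => ∑ b : Fin (m q),
          (if p < q then fderiv ℂ (fun s => Φ p q s a b) t (Pi.single μ 1) else 0) • η q b),
        Fin.sum_univ_eq_sum_range (fun q => ∑ c : Fin (m q),
          (∑ j ∈ Finset.range (min (p+2) (q+1)), ∑ b, A j a b * Φ j q t b c) • η q c)]
      exact hE
    exact sub_eq_zero.mp (hkey _ hsig x)
  -- vanishing of the lower coefficient matrices
  have hzero : ∀ j, j ≤ p → ∀ a (b : Fin (m j)), A j a b = 0 := by
    intro j
    induction j using Nat.strong_induction_on with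
    | _ j IH =>
      intro hjp a b
      have hx := hcoef a ⟨⟨j, by omega⟩, b⟩
      simp only [Fin.val_mk] at hx
      rw [if_neg (by omega : ¬ p < j)] at hx
      rw [(by omega : min (p+2) (j+1) = j+1), Finset.sum_range_succ] at hx
      rw [Finset.sum_eq_zero (fun j' hj' => by
          have hj'j : j' < j := Finset.mem_range.mp hj'
          simp [IH j' hj'j (by omega)]), zero_add, hΦdiag] at hx
      simpa [Matrix.one_apply, mul_ite] using hx.symm
  -- identification of the top coefficient matrix
  have htop : ∀ a (b : Fin (m (p+1))),
      A (p+1) a b = fderiv ℂ (fun s => Φ p (p+1) s a b) t (Pi.single μ 1) := by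
    intro a b
    have hx := hcoef a ⟨⟨p+1, by omega⟩, b⟩
    simp only [Fin.val_mk] at hx
    rw [if_pos (by omega : p < p+1)] at hx
    rw [(by omega : min (p+2) (p+1+1) = p+2), Finset.sum_range_succ] at hx
    rw [Finset.sum_eq_zero (fun j' hj' => by
        have hj'p : j' < p+1 := Finset.mem_range.mp hj'
        simp [hzero j' (by omega)]), zero_add, hΦdiag] at hx
    simpa [Matrix.one_apply, mul_ite] using hx.symm
  refine ⟨fun j hj => Matrix.ext fun a b => ?_, Matrix.ext fun a b => ?_⟩
  · simpa using hzero j hj a b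
  · simpa using htop a b
end

section
/- Let φ ∈ A^{0,1}(X, T^{1,0}X) on a complex manifold X and let η be a smooth form. Then for every k ≥ 2, d(i_φ^k η) = k·i_φ^{k−1} d(i_φ η) − (k−1)·i_φ^k dη − (k(k−1)/2)·i_φ^{k−2} i_{[φ,φ]} η, where this follows by induction from the generalized Cartan formula i_{[φ,φ']} = L_φ ∘ i_{φ'} − i_{φ'} ∘ L_φ with L_φ = −d∘i_φ + i_φ∘d. -/
/-- **Iterated contraction formula (induction from the generalized Cartan formula).**
Let `d`, `i_φ`, `i_{[φ,φ]}` be operators on the space of forms (modeled as a complex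
vector space `M`) with `L_φ = -d∘i_φ + i_φ∘d` (the Lie derivative of a `(0,1)`-form
valued field), satisfying the generalized Cartan formula
`i_{[φ,φ]} = L_φ ∘ i_φ - i_φ ∘ L_φ` and `i_φ ∘ i_{[φ,φ]} = i_{[φ,φ]} ∘ i_φ`.
Then for every `k ≥ 2` and form `η`,
`d(i_φ^k η) = k·i_φ^{k-1} d(i_φ η) - (k-1)·i_φ^k dη - (k(k-1)/2)·i_φ^{k-2} i_{[φ,φ]} η`. -/
theorem stmt13 {M : Type*} [AddCommGroup M] [Module ℂ M]
    (d iφ ibr L : M →ₗ[ℂ] M)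
    (hL : L = -(d ∘ₗ iφ) + iφ ∘ₗ d)
    (hCartan : ibr = L ∘ₗ iφ - iφ ∘ₗ L)
    (hcomm : iφ ∘ₗ ibr = ibr ∘ₗ iφ) :
    ∀ k : ℕ, 2 ≤ k → ∀ η : M,
      d ((iφ ^ k) η)
        = (k : ℂ) • (iφ ^ (k - 1)) (d (iφ η))
          - ((k : ℂ) - 1) • (iφ ^ k) (d η)
          - (((k : ℂ) * ((k : ℂ) - 1)) / 2) • (iφ ^ (k - 2)) (ibr η) := by
  subst hL
  have base : ∀ η : M, d (iφ (iφ η))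
      = (2 : ℂ) • iφ (d (iφ η)) - iφ (iφ (d η)) - ibr η := by
    intro η
    have h := congrArg (fun f : M →ₗ[ℂ] M => f η) hCartan
    simp only [LinearMap.sub_apply, LinearMap.comp_apply, LinearMap.add_apply,
      LinearMap.neg_apply, map_add, map_neg] at h
    rw [h]
    module
  have hcomm' : ∀ η : M, ibr (iφ η) = iφ (ibr η) := by
    intro η
    have h := congrArg (fun f : M →ₗ[ℂ] M => f η) hcomm
    simpa using h.symm
  intro k hk
  induction k, hk using Nat.le_induction with
  | base =>
      intro η
      have hb := base η
      norm_num [pow_succ, pow_zero, pow_one, Module.End.mul_apply, Module.End.one_apply]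
      exact hb
  | succ k hk ih =>
      intro η
      have hk1 : k - 1 + 1 = k := by omega
      have hk2 : k - 2 + 1 = k - 1 := by omega
      -- canonical step lemmas
      have s1 : ∀ x : M, (iφ ^ (k + 1)) x = (iφ ^ k) (iφ x) := by
        intro x; rw [pow_succ]; rfl
      have s2 : ∀ x : M, (iφ ^ k) x = (iφ ^ (k - 1)) (iφ x) := by
        intro x; conv_lhs => rw [← hk1, pow_succ]
        rfl
      have s3 : ∀ x : M, (iφ ^ (k - 1)) x = (iφ ^ (k - 2)) (iφ x) := by
        intro x; conv_lhs => rw [← hk2, pow_succ]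
        rfl
      have IH := ih (iφ η)
      rw [s1, IH, base η]
      simp only [map_sub, map_smul, Nat.add_sub_cancel,
        show k + 1 - 2 = k - 1 from by omega, hcomm']
      rw [s2 (d (iφ η)), ← s3 (ibr η), s1 (d η), s2 (iφ (d η))]
      push_cast
      match_scalars <;> ring
end

section
/- Let φ ∈ A^{0,1}(X, T^{1,0}X) be integrable, i.e. ∂̄φ = (1/2)[φ,φ]. Then on A^{*,*}(X), e^{−i_φ} ∘ d ∘ e^{i_φ} = d + ∂∘i_φ − i_φ∘∂. -/
theorem fact_c1 (k : ℕ) : (((k+1).factorial : ℂ))⁻¹ * ((k+1 : ℕ) : ℂ) = ((k.factorial : ℂ))⁻¹ := by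
  have h1 : ((k+1).factorial : ℂ) = ((k+1 : ℕ) : ℂ) * (k.factorial : ℂ) := by
    rw [Nat.factorial_succ]; push_cast; ring
  have h2 : ((k+1 : ℕ) : ℂ) ≠ 0 := Nat.cast_ne_zero.2 (Nat.succ_ne_zero k)
  have h3 : ((k.factorial : ℂ)) ≠ 0 := Nat.cast_ne_zero.2 k.factorial_ne_zero
  rw [h1, mul_inv]
  rw [mul_comm ((k+1:ℕ):ℂ)⁻¹, mul_assoc, inv_mul_cancel₀ h2, mul_one]

theorem fact_c2 (k : ℕ) : (((k+2).factorial : ℂ))⁻¹ * (((k+2).choose 2 : ℕ) : ℂ)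
    = (2 : ℂ)⁻¹ * ((k.factorial : ℂ))⁻¹ := by
  have h0 : (k+2).choose 2 * (Nat.factorial 2) * k.factorial = (k+2).factorial := by
    have := Nat.choose_mul_factorial_mul_factorial (n := k+2) (k := 2) (by omega)
    simpa [Nat.add_sub_cancel] using this
  have h1 : (((k+2).choose 2 : ℕ) : ℂ) * 2 * (k.factorial : ℂ) = ((k+2).factorial : ℂ) := by
    have := congrArg (fun n : ℕ => (n : ℂ)) h0
    push_cast at this
    simpa [Nat.factorial] using this
  have h3 : ((k.factorial : ℂ)) ≠ 0 := Nat.cast_ne_zero.2 k.factorial_ne_zero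
  have h4 : (((k+2).factorial : ℂ)) ≠ 0 := Nat.cast_ne_zero.2 (k+2).factorial_ne_zero
  rw [← h1]
  rw [mul_inv, mul_inv]
  have h5 : ((((k+2).choose 2 : ℕ)) : ℂ) ≠ 0 := by
    have := Nat.choose_pos (n := k+2) (k := 2) (by omega)
    exact Nat.cast_ne_zero.2 (by omega)
  field_simp
theorem scalarsum (m : ℕ) :
    (∑ k ∈ Finset.range (m+1),
      ((-1:ℂ)^k * ((k.factorial:ℂ)⁻¹ * (((m-k).factorial:ℂ))⁻¹)))
      = if m = 0 then 1 else 0 := by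
  have key : ∀ k ∈ Finset.range (m+1),
      (-1:ℂ)^k * ((k.factorial:ℂ)⁻¹ * (((m-k).factorial:ℂ))⁻¹)
        = (m.factorial:ℂ)⁻¹ * ((-1:ℂ)^k * (m.choose k : ℂ)) := by
    intro k hk
    have hkm : k ≤ m := Nat.lt_succ_iff.1 (Finset.mem_range.1 hk)
    have h0 : (m.choose k) * k.factorial * (m-k).factorial = m.factorial :=
      Nat.choose_mul_factorial_mul_factorial hkm
    have h1 : ((m.choose k : ℕ) : ℂ) * (k.factorial : ℂ) * ((m-k).factorial : ℂ)
        = (m.factorial : ℂ) := by exact_mod_cast congrArg (fun n : ℕ => (n:ℂ)) h0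
    have hk1 : (k.factorial : ℂ) ≠ 0 := Nat.cast_ne_zero.2 k.factorial_ne_zero
    have hk2 : (((m-k).factorial : ℂ)) ≠ 0 := Nat.cast_ne_zero.2 (m-k).factorial_ne_zero
    have hk3 : ((m.factorial : ℂ)) ≠ 0 := Nat.cast_ne_zero.2 m.factorial_ne_zero
    have hk4 : ((m.choose k : ℕ) : ℂ) ≠ 0 := by
      have := Nat.choose_pos hkm; exact Nat.cast_ne_zero.2 (by omega)
    field_simp [← h1]
    rw [← h1]
    ring
  rw [Finset.sum_congr rfl key, ← Finset.mul_sum]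
  have hint := Int.alternating_sum_range_choose (n := m)
  have hc : (∑ i ∈ Finset.range (m+1), ((-1:ℂ))^i * ((m.choose i : ℕ) : ℂ))
      = if m = 0 then 1 else 0 := by
    have := congrArg (fun z : ℤ => (z : ℂ)) hint
    push_cast at this
    simpa using this
  rw [hc]
  split <;> simp_all [Nat.factorial]

section
variable {A : Type*} [Ring A] [Algebra ℂ A] (d i L b : A)
variable (hdi : d * i = i * d - L) (hLi : L * i = i * L + b) (hbi : b * i = i * b)

include hdi hLi hbi in
theorem auxF : ∀ k : ℕ, d * i ^ k =
    i ^ k * d - (k : ℂ) • (i ^ (k - 1) * L) - ((k.choose 2 : ℕ) : ℂ) • (i ^ (k - 2) * b) := by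
  have step : ∀ n : ℕ, d * i ^ (n + 2) =
      i ^ (n + 2) * d - ((n + 2 : ℕ) : ℂ) • (i ^ (n + 1) * L)
        - (((n + 2).choose 2 : ℕ) : ℂ) • (i ^ n * b) := by
    intro n
    induction n with
    | zero =>
      norm_num
      have : d * i ^ 2 = (d * i) * i := by rw [pow_two, mul_assoc]
      rw [this, hdi, sub_mul, mul_assoc, hdi, hLi]
      norm_num
      simp only [mul_sub, mul_add, mul_assoc, pow_two, pow_one, pow_zero, one_mul, one_smul]
      module
    | succ n ih =>
      have h1 : d * i ^ (n + 3) = (d * i ^ (n + 2)) * i := by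
        rw [mul_assoc, ← pow_succ]
      rw [h1, ih, sub_mul, sub_mul, smul_mul_assoc, smul_mul_assoc,
        mul_assoc, mul_assoc, mul_assoc, hdi, hLi, hbi]
      have hc : (((n + 3).choose 2 : ℕ) : ℂ) = ((n + 2 : ℕ) : ℂ) + (((n + 2).choose 2 : ℕ) : ℂ) := by
        rw [show n + 3 = (n + 2) + 1 from rfl, Nat.choose_succ_succ' (n+2) 1]
        push_cast [Nat.choose_one_right]
        ring
      rw [hc]
      have e1 : i ^ (n + 2) * (i * d) = i ^ (n + 3) * d := by rw [← mul_assoc, ← pow_succ]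
      have e2 : i ^ (n + 1) * (i * L) = i ^ (n + 2) * L := by rw [← mul_assoc, ← pow_succ]
      have e3 : i ^ n * (i * b) = i ^ (n + 1) * b := by rw [← mul_assoc, ← pow_succ]
      rw [mul_sub, e1, mul_add, e2, e3]
      simp only [show n + 1 + 2 = n + 3 from rfl, show n + 1 + 1 = n + 2 from rfl]
      push_cast
      module
  intro k
  match k with
  | 0 => simp
  | 1 => simpa using hdi
  | (n + 2) => exact step n
end

section
variable {A : Type*} [Ring A] [Algebra ℂ A] (i L b : A)

theorem term2 (m : ℕ) :
    (∑ k ∈ Finset.range (m+2), ((k.factorial : ℂ)⁻¹ * (k : ℂ)) • (i ^ (k-1) * L))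
      = ∑ k ∈ Finset.range (m+1), ((k.factorial : ℂ)⁻¹) • (i ^ k * L) := by
  rw [Finset.sum_range_succ']
  norm_num
  refine Finset.sum_congr rfl fun k _ => ?_
  congr 1
  rw [← fact_c1 k]
  push_cast
  ring

theorem term3 (m : ℕ) :
    (∑ k ∈ Finset.range (m+2), ((k.factorial : ℂ)⁻¹ * ((k.choose 2 : ℕ) : ℂ)) • (i ^ (k-2) * b))
      = (2:ℂ)⁻¹ • ∑ k ∈ Finset.range m, ((k.factorial : ℂ)⁻¹) • (i ^ k * b) := by
  rw [Finset.sum_range_succ', Finset.sum_range_succ']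
  have c0 : ((Nat.choose 0 2 : ℕ) : ℂ) = 0 := by norm_num [Nat.choose]
  have c1 : ((Nat.choose 1 2 : ℕ) : ℂ) = 0 := by norm_num [Nat.choose]
  simp only [zero_add, c0, c1, mul_zero, zero_smul, add_zero]
  rw [Finset.smul_sum]
  refine Finset.sum_congr rfl fun k _ => ?_
  rw [show k + 1 + 1 = k + 2 from rfl, Nat.add_sub_cancel, fact_c2, mul_smul]
end
section
variable {A : Type*} [Ring A] [Algebra ℂ A] (d i L b : A)
variable (hdi : d * i = i * d - L) (hLi : L * i = i * L + b) (hbi : b * i = i * b)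

include hdi hLi hbi in
theorem auxdS (m : ℕ) :
    d * (∑ k ∈ Finset.range (m+2), ((k.factorial : ℂ)⁻¹) • i ^ k)
      = (∑ k ∈ Finset.range (m+2), ((k.factorial : ℂ)⁻¹) • i ^ k) * d
        - (∑ k ∈ Finset.range (m+1), ((k.factorial : ℂ)⁻¹) • i ^ k) * L
        - (2:ℂ)⁻¹ • ((∑ k ∈ Finset.range m, ((k.factorial : ℂ)⁻¹) • i ^ k) * b) := by
  have expand : ∀ (y : A) (n : ℕ),
      (∑ k ∈ Finset.range n, ((k.factorial : ℂ)⁻¹) • i ^ k) * y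
        = ∑ k ∈ Finset.range n, ((k.factorial : ℂ)⁻¹) • (i ^ k * y) := fun y n => by
    rw [Finset.sum_mul]
    exact Finset.sum_congr rfl fun k _ => smul_mul_assoc _ _ _
  rw [Finset.mul_sum, expand d, expand L, expand b, ← term2 i L m, ← term3 i b m,
    ← Finset.sum_sub_distrib, ← Finset.sum_sub_distrib]
  refine Finset.sum_congr rfl fun k _ => ?_
  rw [mul_smul_comm, auxF d i L b hdi hLi hbi k, smul_sub, smul_sub, smul_smul, smul_smul]
end
section
variable {A : Type*} [Ring A] [Algebra ℂ A]

theorem auxEE (x : A) (K : ℕ) (hK : 0 < K) (hnil : x ^ K = 0) :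
    (∑ j ∈ Finset.range K, ((j.factorial : ℂ)⁻¹) • (-x) ^ j)
      * (∑ k ∈ Finset.range K, ((k.factorial : ℂ)⁻¹) • x ^ k) = 1 := by
  have hneg : ∀ j : ℕ, ((j.factorial : ℂ)⁻¹) • (-x) ^ j
      = ((-1:ℂ)^j * (j.factorial : ℂ)⁻¹) • x ^ j := by
    intro j
    rw [show (-x) = (-1:ℂ) • x by simp, smul_pow, smul_smul]
    ring_nf
  simp only [hneg]
  rw [Finset.sum_mul_sum]
  have hterm : ∀ j k : ℕ, (((-1:ℂ)^j * (j.factorial : ℂ)⁻¹) • x ^ j)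
      * (((k.factorial : ℂ)⁻¹) • x ^ k)
      = ((-1:ℂ)^j * ((j.factorial : ℂ)⁻¹ * (k.factorial : ℂ)⁻¹)) • x ^ (j+k) := by
    intro j k
    rw [smul_mul_assoc, mul_smul_comm, smul_smul, pow_add]
    ring_nf
  simp only [hterm]
  have htrunc : ∀ j ∈ Finset.range K,
      (∑ k ∈ Finset.range K, ((-1:ℂ)^j * ((j.factorial : ℂ)⁻¹ * (k.factorial : ℂ)⁻¹)) • x ^ (j+k))
      = ∑ k ∈ Finset.range (K - j), ((-1:ℂ)^j * ((j.factorial : ℂ)⁻¹ * (k.factorial : ℂ)⁻¹)) • x ^ (j+k) := by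
    intro j _
    refine (Finset.sum_subset (Finset.range_subset_range.2 (Nat.sub_le K j)) ?_).symm
    intro k _ hk
    have : K ≤ j + k := by
      have := Finset.mem_range.not.1 hk
      omega
    rw [pow_eq_zero_of_le this hnil, smul_zero]
  rw [Finset.sum_congr rfl htrunc, ← Finset.sum_range_diag_flip K
    (fun a c => ((-1:ℂ)^a * ((a.factorial : ℂ)⁻¹ * (c.factorial : ℂ)⁻¹)) • x ^ (a+c))]
  have hinner : ∀ n ∈ Finset.range K,
      (∑ k ∈ Finset.range (n+1),
        ((-1:ℂ)^k * ((k.factorial : ℂ)⁻¹ * ((n-k).factorial : ℂ)⁻¹)) • x ^ (k+(n-k)))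
      = if n = 0 then 1 else 0 := by
    intro n _
    have hrw : ∀ k ∈ Finset.range (n+1),
        ((-1:ℂ)^k * ((k.factorial : ℂ)⁻¹ * ((n-k).factorial : ℂ)⁻¹)) • x ^ (k+(n-k))
        = ((-1:ℂ)^k * ((k.factorial : ℂ)⁻¹ * ((n-k).factorial : ℂ)⁻¹)) • x ^ n := by
      intro k hk
      have : k + (n - k) = n := by
        have := Finset.mem_range.1 hk; omega
      rw [this]
    rw [Finset.sum_congr rfl hrw, ← Finset.sum_smul, scalarsum]
    split
    · subst ‹n = 0›; simp
    · simp
  rw [Finset.sum_congr rfl hinner]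
  rw [Finset.sum_ite_eq' (Finset.range K) 0 (fun _ => (1:A))]
  simp [Finset.mem_range, hK]
end
section
variable {A : Type*} [Ring A] [Algebra ℂ A]

noncomputable def Spow (i : A) (n : ℕ) : A :=
  ∑ k ∈ Finset.range n, ((k.factorial : ℂ)⁻¹) • i ^ k

theorem Spow_succ (i : A) (n : ℕ) :
    Spow i (n+1) = Spow i n + ((n.factorial : ℂ)⁻¹) • i ^ n :=
  Finset.sum_range_succ _ n
end


/-- **Conjugation of `d` by `e^{i_φ}` for an integrable Beltrami differential
(Corollary 3.8).**  With `d = ∂ + ∂̄`, the commutator identity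
`∂̄∘i_φ - i_φ∘∂̄ = i_{∂̄φ}` and the Maurer–Cartan equation `∂̄φ = (1/2)[φ,φ]`
(combined in the hypothesis `hMC`), together with the generalized Cartan formula,
one has `e^{-i_φ} ∘ d ∘ e^{i_φ} = d + ∂∘i_φ - i_φ∘∂`. -/
theorem stmt15 {M : Type*} [AddCommGroup M] [Module ℂ M]
    (d dp dq iφ ibr L : M →ₗ[ℂ] M)
    (hd : d = dp + dq)
    (hL : L = -(d ∘ₗ iφ) + iφ ∘ₗ d)
    (hCartan : ibr = L ∘ₗ iφ - iφ ∘ₗ L)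
    (hcomm : iφ ∘ₗ ibr = ibr ∘ₗ iφ)
    (hMC : dq ∘ₗ iφ - iφ ∘ₗ dq = (2 : ℂ)⁻¹ • ibr)
    {K : ℕ} (hnil : iφ ^ K = 0)
    (E E' : M →ₗ[ℂ] M)
    (hE : E = ∑ k ∈ Finset.range K, ((k.factorial : ℂ)⁻¹) • iφ ^ k)
    (hE' : E' = ∑ k ∈ Finset.range K, ((k.factorial : ℂ)⁻¹) • (-iφ) ^ k) :
    E' ∘ₗ d ∘ₗ E = d + dp ∘ₗ iφ - iφ ∘ₗ dp := by
  -- trivial cases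
  match K, hnil, hE, hE' with
  | 0, hnil, hE, hE' =>
    have hone : (1 : M →ₗ[ℂ] M) = 0 := by simpa using hnil
    have hz : ∀ f : M →ₗ[ℂ] M, f = 0 := fun f => by
      calc f = f * 1 := (mul_one f).symm
      _ = f * 0 := by rw [hone]
      _ = 0 := mul_zero f
    exact (hz _).trans (hz _).symm
  | 1, hnil, hE, hE' =>
    have hi : iφ = 0 := by simpa using hnil
    simp only [hE, hE', hi, Finset.sum_range_one, Nat.factorial_zero, Nat.cast_one, inv_one,
      pow_zero, one_smul, neg_zero]
    simp [Module.End.one_eq_id]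
  | (m + 2), hnil, hE, hE' =>
    -- basic commutators, in `*` form
    have hdi : d * iφ = iφ * d - L := by
      rw [hL]; simp only [Module.End.mul_eq_comp]; abel
    have hLi : L * iφ = iφ * L + ibr := by
      rw [hCartan]; simp only [Module.End.mul_eq_comp]; abel
    have hbi : ibr * iφ = iφ * ibr := by
      simp only [Module.End.mul_eq_comp]; exact hcomm.symm
    -- the right-hand side in compact form
    have hX : d + dp ∘ₗ iφ - iφ ∘ₗ dp = d - L - (2:ℂ)⁻¹ • ibr := by
      rw [← hMC, hL, hd]
      simp only [LinearMap.add_comp, LinearMap.comp_add]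
      abel
    set X : M →ₗ[ℂ] M := d - L - (2:ℂ)⁻¹ • ibr with hXdef
    -- scalar constant
    set c1 : ℂ := -(((m+1 : ℕ) : ℂ)/2) with hc1
    have hm2 : ((m+2 : ℕ) : ℂ) ≠ 0 := Nat.cast_ne_zero.2 (by omega)
    have hch : (((m+2).choose 2 : ℕ) : ℂ) = ((m+2 : ℕ) : ℂ) * ((m+1 : ℕ) : ℂ) / 2 := by
      have hdvd : 2 ∣ (m+2) * (m+1) := by
        have h := Nat.even_mul_succ_self (m+1)
        rw [mul_comm] at h
        exact h.two_dvd
      have h2 : (m+2).choose 2 * 2 = (m+2) * (m+1) := by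
        rw [Nat.choose_two_right, show m + 2 - 1 = m + 1 from rfl, Nat.div_mul_cancel hdvd]
      have h3 := congrArg (fun n : ℕ => (n : ℂ)) h2
      push_cast at h3 ⊢
      linear_combination h3 / 2
    -- key identity 1 : iφ^(m+1) * L = c1 • (iφ^m * ibr)
    have hF := auxF d iφ L ibr hdi hLi hbi (m+2)
    rw [hnil, mul_zero, zero_mul, zero_sub,
      show m + 2 - 1 = m + 1 from rfl, show m + 2 - 2 = m from rfl] at hF
    have h2 : ((m+2 : ℕ) : ℂ) • (iφ^(m+1) * L) = -((((m+2).choose 2 : ℕ) : ℂ) • (iφ^m * ibr)) := by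
      have h := hF.symm
      rw [sub_eq_zero] at h
      exact neg_eq_iff_eq_neg.1 h
    have key1 : iφ^(m+1) * L = c1 • (iφ^m * ibr) := by
      have h3 : iφ^(m+1)*L = ((m+2:ℕ):ℂ)⁻¹ • (((m+2:ℕ):ℂ) • (iφ^(m+1)*L)) := by
        rw [smul_smul, inv_mul_cancel₀ hm2, one_smul]
      rw [h3, h2, smul_neg, smul_smul, ← neg_smul]
      congr 1
      rw [hch, show ((m+2:ℕ):ℂ) * ((m+1:ℕ):ℂ) / 2 = ((m+2:ℕ):ℂ) * (((m+1:ℕ):ℂ) / 2) from by ring,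
        inv_mul_cancel_left₀ hm2, hc1]
    -- key identity 2 : iφ^(m+1) * ibr = 0
    have key2 : iφ^(m+1) * ibr = 0 := by
      have h5 : iφ^(m+1) * ibr = c1 • (iφ^(m+1) * ibr) := by
        calc iφ^(m+1) * ibr = iφ^(m+1) * (L * iφ) - iφ^(m+2) * L := by
              rw [hCartan]; simp only [Module.End.mul_eq_comp]
              rw [show (m+2) = (m+1) + 1 from rfl, pow_succ]
              simp only [LinearMap.comp_sub, LinearMap.comp_assoc]
              abel
        _ = (iφ^(m+1) * L) * iφ := by rw [hnil, zero_mul, sub_zero, mul_assoc]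
        _ = (c1 • (iφ^m * ibr)) * iφ := by rw [key1]
        _ = c1 • (iφ^m * (ibr * iφ)) := by rw [smul_mul_assoc, mul_assoc]
        _ = c1 • (iφ^(m+1) * ibr) := by rw [hbi, ← mul_assoc, ← pow_succ]
      have hne : (1:ℂ) - c1 ≠ 0 := by
        rw [hc1]
        have : (1:ℂ) - -(((m+1:ℕ):ℂ)/2) = ((m+3:ℕ):ℂ)/2 := by push_cast; ring
        rw [this]
        exact div_ne_zero (Nat.cast_ne_zero.2 (by omega)) two_ne_zero
      have h6 : (1 - c1) • (iφ^(m+1) * ibr) = 0 := by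
        rw [sub_smul, one_smul]
        nth_rewrite 1 [h5]
        rw [sub_self]
      have h7 := congrArg (fun z => ((1:ℂ) - c1)⁻¹ • z) h6
      simpa [smul_smul, inv_mul_cancel₀ hne] using h7
    -- d * E = E * X
    have hE2 : E = Spow iφ (m+2) := hE
    have hE'2 : E' * E = 1 := by
      rw [hE, hE']
      exact auxEE iφ (m+2) (by omega) hnil
    have hb : ((m+1).factorial : ℂ)⁻¹ * c1 = -((2:ℂ)⁻¹ * (m.factorial : ℂ)⁻¹) := by
      rw [hc1, ← fact_c1 m]
      ring
    have hdS := auxdS d iφ L ibr hdi hLi hbi m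
    have key1b : ((m+1).factorial : ℂ)⁻¹ • (iφ^(m+1) * L)
        = -((2:ℂ)⁻¹ • (((m.factorial : ℂ)⁻¹) • (iφ^m * ibr))) := by
      rw [key1, smul_smul, hb, neg_smul, mul_smul]
    have hdE : d * E = E * X := by
      rw [hE2, hXdef]
      rw [show (∑ k ∈ Finset.range (m+2), ((k.factorial : ℂ)⁻¹) • iφ ^ k) = Spow iφ (m+2) from rfl,
        show (∑ k ∈ Finset.range (m+1), ((k.factorial : ℂ)⁻¹) • iφ ^ k) = Spow iφ (m+1) from rfl,
        show (∑ k ∈ Finset.range m, ((k.factorial : ℂ)⁻¹) • iφ ^ k) = Spow iφ m from rfl] at hdS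
      rw [hdS]
      rw [mul_sub, mul_sub, mul_smul_comm, Spow_succ iφ (m+1), Spow_succ iφ m]
      simp only [add_mul, smul_mul_assoc]
      rw [key1b, key2, smul_zero]
      module
    calc E' ∘ₗ d ∘ₗ E = E' * (d * E) := rfl
    _ = E' * (E * X) := by rw [hdE]
    _ = (E' * E) * X := by rw [mul_assoc]
    _ = X := by rw [hE'2, one_mul]
    _ = d + dp ∘ₗ iφ - iφ ∘ₗ dp := hX.symm
end

section
/- Let φ ∈ A^{0,1}(X, T^{1,0}X) be an integrable Beltrami differential on a complex manifold X and σ ∈ A^{p,q}(X). Then e^{i_φ}(σ) is d-closed if and only if ∂σ = 0 and ∂̄σ = −∂(φ⌟σ). -/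
/-- **`d`-closedness of `e^{i_φ}σ` (Corollary 3.9).**
Model the forms on a complex manifold as a bigraded complex vector space
(`M` with internal direct sum of the bigraded pieces `Adeg p q`), with operators
`∂`, `∂̄`, `d = ∂ + ∂̄` of bidegrees `(1,0)`, `(0,1)` and contraction `i_φ` of
bidegree `(-1,1)` for an integrable Beltrami differential `φ`.  Let
`E = e^{i_φ}` (a finite exponential sum by nilpotency) with left inverse `E'`, and
assume the conjugation identity `d ∘ E = E ∘ (d + ∂∘i_φ - i_φ∘∂)` of
Corollary 3.8.  Then for `σ ∈ A^{p,q}(X)`, the form `e^{i_φ}(σ)` is `d`-closed if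
and only if `∂σ = 0` and `∂̄σ = -∂(φ⌟σ)`. -/
theorem stmt16 {M : Type*} [AddCommGroup M] [Module ℂ M]
    (Adeg : ℤ → ℤ → Submodule ℂ M)
    (hinternal : DirectSum.IsInternal fun pq : ℤ × ℤ => Adeg pq.1 pq.2)
    (d dp dq iφ : M →ₗ[ℂ] M)
    (hd : d = dp + dq)
    (hpdeg : ∀ a b : ℤ, ∀ x ∈ Adeg a b, dp x ∈ Adeg (a + 1) b)
    (hqdeg : ∀ a b : ℤ, ∀ x ∈ Adeg a b, dq x ∈ Adeg a (b + 1))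
    (hiφdeg : ∀ a b : ℤ, ∀ x ∈ Adeg a b, iφ x ∈ Adeg (a - 1) (b + 1))
    {K : ℕ} (hnil : iφ ^ K = 0)
    (E E' : M →ₗ[ℂ] M)
    (hE : E = ∑ k ∈ Finset.range K, ((k.factorial : ℂ)⁻¹) • iφ ^ k)
    (hE'E : E' ∘ₗ E = LinearMap.id)
    (hconj : d ∘ₗ E = E ∘ₗ (d + dp ∘ₗ iφ - iφ ∘ₗ dp))
    {a b : ℤ} (σ : M) (hσ : σ ∈ Adeg a b) :
    d (E σ) = 0 ↔ (dp σ = 0 ∧ dq σ = -dp (iφ σ)) := by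
  have key : d (E σ) = E (dp σ + (dq σ + dp (iφ σ) - iφ (dp σ))) := by
    have := congrArg (fun f : M →ₗ[ℂ] M => f σ) hconj
    simp only [LinearMap.comp_apply, LinearMap.add_apply, LinearMap.sub_apply] at this
    rw [this, hd]
    congr 1
    simp [LinearMap.add_apply]
    abel
  constructor
  · intro h0
    have hz : dp σ + (dq σ + dp (iφ σ) - iφ (dp σ)) = 0 := by
      have h1 : E (dp σ + (dq σ + dp (iφ σ) - iφ (dp σ))) = 0 := by rw [← key]; exact h0
      have h2 := congrArg (fun f : M →ₗ[ℂ] M => f (dp σ + (dq σ + dp (iφ σ) - iφ (dp σ)))) hE'E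
      simp only [LinearMap.comp_apply, LinearMap.id_apply] at h2
      rw [← h2, h1, map_zero]
    have hx : dp σ ∈ Adeg (a + 1) b := hpdeg a b σ hσ
    have hy : dq σ + dp (iφ σ) - iφ (dp σ) ∈ Adeg a (b + 1) := by
      refine Submodule.sub_mem _ (Submodule.add_mem _ (hqdeg a b σ hσ) ?_) ?_
      · simpa using hpdeg (a - 1) (b + 1) _ (hiφdeg a b σ hσ)
      · simpa using hiφdeg (a + 1) b _ hx
    have hdisj : Disjoint (Adeg (a + 1) b) (Adeg a (b + 1)) := by
      have hind := hinternal.submodule_iSupIndep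
      have := hind.pairwiseDisjoint (i := ((a + 1, b) : ℤ × ℤ)) (j := ((a, b + 1) : ℤ × ℤ))
        (by simp [Prod.ext_iff])
      simpa using this
    have hxz : dp σ = 0 := by
      have hmem : dp σ ∈ Adeg a (b + 1) := by
        have heq : dp σ = -(dq σ + dp (iφ σ) - iφ (dp σ)) := eq_neg_of_add_eq_zero_left hz
        rw [heq]; exact Submodule.neg_mem _ hy
      exact (Submodule.disjoint_def.mp hdisj) _ hx hmem
    refine ⟨hxz, ?_⟩
    rw [hxz, map_zero, sub_zero, zero_add] at hz
    exact eq_neg_of_add_eq_zero_left hz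
  · rintro ⟨h1, h2⟩
    rw [key, h1, map_zero, sub_zero, zero_add, h2]
    simp
end
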